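/- In a logistic circuit, the weight function g_r(x) of the root node is an affine (in fact linear) function of the parameter vector θ for each fixed input x: there exists a feature vector 𝕩(x), depending only on x and the circuit structure, such that g_r(x) = 𝕩(x)·θ. -/
import Mathlib


open scoped Classical

/-- A logistic circuit over `n` Boolean input variables with `k` parameters.
OR gates carry, for each input wire, an index into the parameter vector. -/
inductive LC (n k : ℕ) : Type
  | leaf (i : Fin n) (b : Bool) : LC n k
  | and (m : ℕ) (c : Fin m → LC n k) : LC n k
  | or (m : ℕ) (c : Fin m → LC n k) (p : Fin m → Fin k) : LC n k

/-- Satisfaction of the logical sentence represented by a circuit node. -/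
def LC.sat {n k : ℕ} : LC n k → (Fin n → Bool) → Prop
  | .leaf i b, x => x i = b
  | .and _ c, x => ∀ j, (c j).sat x
  | .or _ c _, x => ∃ j, (c j).sat x

/-- The weight function of a logistic circuit: leaves have weight 0, AND gates sum
their children, and OR gates sum, over wires with Boolean flow 1, the child weight
plus the wire parameter. -/
noncomputable def LC.weight {n k : ℕ} : LC n k → (Fin n → Bool) → (Fin k → ℝ) → ℝ
  | .leaf _ _, _, _ => 0
  | .and _ c, x, θ => ∑ j, (c j).weight x θ
  | .or _ c p, x, θ =>
      ∑ j, (if (c j).sat x then (1 : ℝ) else 0) * ((c j).weight x θ + θ (p j))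

theorem weight_linear_in_parameters {n k : ℕ} (C : LC n k) :
    ∃ feat : (Fin n → Bool) → Fin k → ℝ,
      ∀ (x : Fin n → Bool) (θ : Fin k → ℝ),
        C.weight x θ = ∑ j, feat x j * θ j := by
  induction C with
  | leaf i b => exact ⟨fun _ _ => 0, by simp [LC.weight]⟩
  | and m c ih =>
    choose f hf using ih
    refine ⟨fun x j => ∑ i, f i x j, fun x θ => ?_⟩
    simp only [LC.weight, hf, Finset.sum_mul]
    rw [Finset.sum_comm]
  | or m c p ih =>
    choose f hf using ih
    refine ⟨fun x j => ∑ i, (if (c i).sat x then (1:ℝ) else 0) *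
      (f i x j + if p i = j then 1 else 0), fun x θ => ?_⟩
    simp only [LC.weight, hf, Finset.sum_mul]
    rw [Finset.sum_comm]
    refine Finset.sum_congr rfl fun i _ => ?_
    have : θ (p i) = ∑ j, (if p i = j then (1:ℝ) else 0) * θ j := by
      simp [Finset.mul_sum, Finset.sum_ite_eq]
    rw [this, ← Finset.sum_add_distrib, Finset.mul_sum]
    refine Finset.sum_congr rfl fun j _ => ?_
    ring
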